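/- The Bayes risk is monotonically non-increasing in the number of demonstrations: ε_Bayes^{t+1} ≤ ε_Bayes^t for all t ∈ ℕ. -/

import Mathlib

open Finset

/-- Conditional mutual information `I(A ; C | B)` of a joint pmf `w` on `A × B × C`. -/
noncomputable def condMI {A B C : Type*} [Fintype A] [Fintype B] [Fintype C]
    (w : A → B → C → ℝ) : ℝ :=
  ∑ a, ∑ b, ∑ c, w a b c *
    Real.log (w a b c * (∑ a', ∑ c', w a' b c') /
      ((∑ c', w a b c') * (∑ a', w a' b c)))

/-- Weight of a demonstration sequence `d = ((X₁,Y₁),…,(Xₙ,Yₙ))` given environment `e`,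
with inputs i.i.d. from `μ` and outputs drawn from `k e x`. -/
noncomputable def demoW {E X Y : Type*} {n : ℕ}
    (μ : X → ℝ) (k : E → X → Y → ℝ) (e : E) (d : Fin n → X × Y) : ℝ :=
  ∏ i, μ (d i).1 * k e (d i).1 (d i).2

/-- Bayes risk `ε_Bayes^t = I(Y_{t+1}; e | X_{t+1}, D_t)` in the hierarchical generative
model with prior `π` on environments. -/
noncomputable def epsBayes {E X Y : Type*} [Fintype E] [Fintype X] [Fintype Y]
    (π : E → ℝ) (μ : X → ℝ) (k : E → X → Y → ℝ) (t : ℕ) : ℝ :=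
  condMI (fun (e : E) (bc : (Fin t → X × Y) × X) (y : Y) =>
    π e * demoW μ k e bc.1 * μ bc.2 * k e bc.2 y)

/-!
Write `ε^t = I(Y; e | X, D_t) = H(Y | X, D_t) - H(Y | e, X, D_t)`. Given `e`, an extra
demonstration is independent of everything else, so adding it leaves `H(Y | e, X, D_t)`
unchanged, while conditioning on it can only lower `H(Y | X, D_t)` (Gibbs' inequality).
-/

/-- For a positive row `p` this is `(∑ p) · H(p / ∑ p)`; summed over the rows of a joint weight
it is the conditional entropy of the column given the row. -/
noncomputable def entropy {C : Type*} [Fintype C] (p : C → ℝ) : ℝ :=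
  ∑ c, p c * Real.log ((∑ c', p c') / p c)

section Entropy

variable {C : Type*} [Fintype C]

lemma entropy_mul_left (p : C → ℝ) {r : ℝ} (hr : r ≠ 0) :
    entropy (fun c => r * p c) = r * entropy p := by
  simp only [entropy, ← mul_sum, mul_div_mul_left _ _ hr, mul_assoc]

lemma mul_sub_le_mul_log_div {p q : ℝ} (hp : 0 < p) (hq : 0 < q) :
    p - q ≤ p * Real.log (p / q) := by
  have h := mul_le_mul_of_nonneg_left (Real.one_sub_inv_le_log_of_pos (div_pos hp hq)) hp.le
  rwa [inv_div, mul_sub, mul_one, mul_div_cancel₀ _ hp.ne'] at h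

/-- Gibbs' inequality. -/
lemma entropy_le_sum_mul_log_div {p q : C → ℝ} (hp : ∀ c, 0 < p c) (hq : ∀ c, 0 < q c) :
    entropy p ≤ ∑ c, p c * Real.log ((∑ c', q c') / q c) := by
  rcases isEmpty_or_nonempty C with hC | hC
  · simp [entropy]
  set P := ∑ c, p c
  set Q := ∑ c, q c
  have hP : 0 < P := sum_pos (fun c _ => hp c) univ_nonempty
  have hQ : 0 < Q := sum_pos (fun c _ => hq c) univ_nonempty
  -- compare `p` with `q` rescaled to the total mass of `p`
  have hterm : ∀ c, p c - q c * (P / Q) ≤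
      p c * Real.log (Q / q c) - p c * Real.log (P / p c) := by
    intro c
    have h := mul_sub_le_mul_log_div (hp c) (mul_pos (hq c) (div_pos hP hQ))
    rw [← mul_sub, ← Real.log_div (div_pos hQ (hq c)).ne' (div_pos hP (hp c)).ne']
    convert h using 3
    field_simp
  have hmass : ∑ c, (p c - q c * (P / Q)) = 0 := by
    rw [sum_sub_distrib, ← sum_mul, mul_div_cancel₀ _ hQ.ne', sub_self]
  have hsum := sum_le_sum fun c (_ : c ∈ univ) => hterm c
  rw [hmass, sum_sub_distrib] at hsum
  unfold entropy
  linarith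

lemma sum_entropy_le_entropy_sum {Z : Type*} [Fintype Z] {p : Z → C → ℝ}
    (hp : ∀ z c, 0 < p z c) :
    ∑ z, entropy (p z) ≤ entropy (fun c => ∑ z, p z c) :=
  calc ∑ z, entropy (p z)
      ≤ ∑ z, ∑ c, p z c * Real.log ((∑ c', ∑ z', p z' c') / ∑ z', p z' c) :=
        sum_le_sum fun z _ => entropy_le_sum_mul_log_div (hp z)
          fun c => sum_pos (fun z' _ => hp z' c) ⟨z, mem_univ z⟩
    _ = entropy (fun c => ∑ z, p z c) := by
        rw [sum_comm]
        simp only [entropy, ← sum_mul]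

end Entropy

section CondMI

variable {A B C : Type*} [Fintype A] [Fintype B] [Fintype C]

/-- `I(C; A | B) = H(C | B) - H(C | A, B)`. -/
lemma condMI_eq_sum_entropy_sub {w : A → B → C → ℝ} (hw : ∀ a b c, 0 < w a b c) :
    condMI w = ∑ b, entropy (fun c => ∑ a, w a b c) - ∑ a, ∑ b, entropy (w a b) := by
  have hlog : ∀ a b c, Real.log (w a b c * (∑ a', ∑ c', w a' b c') /
      ((∑ c', w a b c') * (∑ a', w a' b c))) =
      Real.log ((∑ c', ∑ a', w a' b c') / ∑ a', w a' b c) -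
        Real.log ((∑ c', w a b c') / w a b c) := by
    intro a b c
    have hP : 0 < ∑ c', w a b c' := sum_pos (fun c' _ => hw a b c') ⟨c, mem_univ c⟩
    have hQ : 0 < ∑ a', w a' b c := sum_pos (fun a' _ => hw a' b c) ⟨a, mem_univ a⟩
    have hS : 0 < ∑ a', ∑ c', w a' b c' :=
      sum_pos (fun a' _ => sum_pos (fun c' _ => hw a' b c') ⟨c, mem_univ c⟩) ⟨a, mem_univ a⟩
    rw [sum_comm (f := fun c' a' => w a' b c'),
      ← Real.log_div (div_pos hS hQ).ne' (div_pos hP (hw a b c)).ne']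
    congr 1
    field_simp
  simp only [condMI, entropy]
  simp_rw [hlog, mul_sub, sum_sub_distrib, sum_mul]
  congr 1
  rw [sum_comm]
  exact sum_congr rfl fun b _ => sum_comm

lemma condMI_comp_equiv {B' : Type*} [Fintype B'] (w : A → B → C → ℝ) (σ : B' ≃ B) :
    condMI (fun a b c => w a (σ b) c) = condMI w := by
  unfold condMI
  refine sum_congr rfl fun a _ => ?_
  exact σ.sum_comp (fun b => ∑ c, w a b c *
    Real.log (w a b c * (∑ a', ∑ c', w a' b c') / ((∑ c', w a b c') * (∑ a', w a' b c))))

theorem condMI_mul_kernel_le {Z : Type*} [Fintype Z] {w : A → B → C → ℝ} {f : A → Z → ℝ}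
    (hw : ∀ a b c, 0 < w a b c) (hf : ∀ a z, 0 < f a z) (hf1 : ∀ a, ∑ z, f a z = 1) :
    condMI (fun a (zb : Z × B) c => f a zb.1 * w a zb.2 c) ≤ condMI w := by
  rcases isEmpty_or_nonempty A with hA | hA
  · simp [condMI]
  rw [condMI_eq_sum_entropy_sub fun a (zb : Z × B) c => mul_pos (hf a zb.1) (hw a zb.2 c),
    condMI_eq_sum_entropy_sub hw]
  have hjoint : ∑ a, ∑ zb : Z × B, entropy (fun c => f a zb.1 * w a zb.2 c) =
      ∑ a, ∑ b, entropy (w a b) := by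
    simp only [entropy_mul_left _ (hf _ _).ne', Fintype.sum_prod_type, ← mul_sum, ← sum_mul,
      hf1, one_mul]
  have hmarg : ∑ zb : Z × B, entropy (fun c => ∑ a, f a zb.1 * w a zb.2 c) ≤
      ∑ b, entropy (fun c => ∑ a, w a b c) := by
    rw [Fintype.sum_prod_type, sum_comm]
    refine sum_le_sum fun b _ => ?_
    calc ∑ z, entropy (fun c => ∑ a, f a z * w a b c)
        ≤ entropy (fun c => ∑ z, ∑ a, f a z * w a b c) :=
          sum_entropy_le_entropy_sum fun z c =>
            sum_pos (fun a _ => mul_pos (hf a z) (hw a b c)) univ_nonempty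
      _ = entropy (fun c => ∑ a, w a b c) := by
          simp only [sum_comm (γ := Z), ← sum_mul, hf1, one_mul]
  linarith

end CondMI

section Demonstrations

variable {E X Y : Type*} {μ : X → ℝ} {k : E → X → Y → ℝ}

lemma demoW_pos {n : ℕ} (hμ : ∀ x, 0 < μ x) (hk : ∀ e x y, 0 < k e x y) (e : E)
    (d : Fin n → X × Y) : 0 < demoW μ k e d :=
  prod_pos fun _ _ => mul_pos (hμ _) (hk _ _ _)

lemma demoW_cons {n : ℕ} (e : E) (z : X × Y) (d : Fin n → X × Y) :
    demoW μ k e (Fin.cons z d) = μ z.1 * k e z.1 z.2 * demoW μ k e d := by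
  simp only [demoW, Fin.prod_univ_succ, Fin.cons_zero, Fin.cons_succ]

lemma sum_prod_mul_kernel_eq_one [Fintype X] [Fintype Y] {κ : X → Y → ℝ}
    (hμsum : ∑ x, μ x = 1) (hκsum : ∀ x, ∑ y, κ x y = 1) :
    ∑ z : X × Y, μ z.1 * κ z.1 z.2 = 1 := by
  simp only [Fintype.sum_prod_type, ← mul_sum, hκsum, mul_one, hμsum]

/-- The first demonstration of `D_{t+1}` is split off as an extra observation. -/
lemma epsBayes_succ [Fintype E] [Fintype X] [Fintype Y] (π : E → ℝ) (μ : X → ℝ)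
    (k : E → X → Y → ℝ) (t : ℕ) :
    epsBayes π μ k (t + 1) =
      condMI (fun e (zb : (X × Y) × ((Fin t → X × Y) × X)) y =>
        μ zb.1.1 * k e zb.1.1 zb.1.2 * (π e * demoW μ k e zb.2.1 * μ zb.2.2 * k e zb.2.2 y)) := by
  rw [epsBayes, ← condMI_comp_equiv _ ((Equiv.prodAssoc _ _ _).symm.trans
    ((Fin.consEquiv fun _ => X × Y).prodCongr (Equiv.refl X)))]
  congr 1
  funext e ⟨z, d, x⟩ y
  change π e * demoW μ k e (Fin.cons z d) * μ x * k e x y = _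
  rw [demoW_cons]
  ring

end Demonstrations

theorem bayes_risk_antitone_general
    {E X Y : Type*} [Fintype E] [Fintype X] [Fintype Y]
    (π : E → ℝ) (μ : X → ℝ) (k : E → X → Y → ℝ)
    (hπ : ∀ e, 0 < π e)
    (hμ : ∀ x, 0 < μ x) (hμsum : ∑ x, μ x = 1)
    (hk : ∀ e x y, 0 < k e x y) (hksum : ∀ e x, ∑ y, k e x y = 1) :
    ∀ t : ℕ, epsBayes π μ k (t + 1) ≤ epsBayes π μ k t := by
  intro t
  rw [epsBayes_succ]
  exact condMI_mul_kernel_le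
    (w := fun e (b : (Fin t → X × Y) × X) y => π e * demoW μ k e b.1 * μ b.2 * k e b.2 y)
    (f := fun e (z : X × Y) => μ z.1 * k e z.1 z.2)
    (fun e b y => mul_pos (mul_pos (mul_pos (hπ e) (demoW_pos hμ hk e b.1)) (hμ b.2))
      (hk e b.2 y))
    (fun e z => mul_pos (hμ z.1) (hk e z.1 z.2))
    (fun e => sum_prod_mul_kernel_eq_one hμsum (hksum e))

/-- The Bayes risk is monotonically non-increasing in the number of demonstrations:
`ε_Bayes^{t+1} ≤ ε_Bayes^t` for all `t ∈ ℕ`. -/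
theorem bayes_risk_antitone
    {E X Y : Type*} [Fintype E] [Fintype X] [Fintype Y]
    (π : E → ℝ) (μ : X → ℝ) (k : E → X → Y → ℝ)
    (hπ : ∀ e, 0 < π e) (hπsum : ∑ e, π e = 1)
    (hμ : ∀ x, 0 < μ x) (hμsum : ∑ x, μ x = 1)
    (hk : ∀ e x y, 0 < k e x y) (hksum : ∀ e x, ∑ y, k e x y = 1) :
    ∀ t : ℕ, epsBayes π μ k (t + 1) ≤ epsBayes π μ k t :=
  bayes_risk_antitone_general π μ k hπ hμ hμsum hk hksum
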